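/- Let E = (ℤ/2)^n with basis e₁, …, e_n, σ_k = ⨁_{|v| = k} v, and ϑ_k = e₁ + ⋯ + e_k. Let σ be an S_n-invariant finite-dimensional complex representation of E such that χ_σ(ϑ_i) = χ_σ(ϑ_{n−i}) for all 0 ≤ i ≤ n, and write σ ≅ ⨁_k m_k(σ) σ_k. Then for 1 ≤ k ≤ n: m_k(σ) = 0 when k is odd; m_k(σ) = (1/2^{n−1}) ∑_{i=0}^{(n−1)/2} χ_{σ_i}(ϑ_k) χ_σ(ϑ_i) when k is even and n is odd; and m_k(σ) = (1/2^{n−1}) ∑_{i=0}^{(n−2)/2} χ_{σ_i}(ϑ_k) χ_σ(ϑ_i) + (1/2^n) χ_{σ_{n/2}}(ϑ_k) χ_σ(ϑ_{n/2}) when both k and n are even. -/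
import Mathlib


open Finset

/-- Hamming weight of a vector in `𝔽₂ⁿ`. -/
def wt {n : ℕ} (v : Fin n → ZMod 2) : ℕ := (Finset.univ.filter fun j => v j ≠ 0).card

/-- The character of `σ_i = ⨁_{|v| = i} v`, the direct sum of all linear characters of
`E = (ℤ/2)ⁿ` of Hamming weight `i`. -/
noncomputable def sigmaChar (n i : ℕ) (e : Fin n → ZMod 2) : ℂ :=
  ∑ v ∈ Finset.univ.filter fun v : Fin n → ZMod 2 => wt v = i,
    (-1 : ℂ) ^ (∑ j, v j * e j).val

/-- `ϑ_k = e₁ + ⋯ + e_k ∈ (ℤ/2)ⁿ`. -/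
def vartheta (n k : ℕ) : Fin n → ZMod 2 := fun j => if (j : ℕ) < k then 1 else 0

lemma neg1_val_add (a b : ZMod 2) : (-1:ℂ)^((a+b).val) = (-1)^a.val * (-1)^b.val := by
  rw [ZMod.val_add, ← pow_add]; exact (neg_one_pow_eq_pow_mod_two _).symm

lemma card_lt' (n k : ℕ) (hk : k ≤ n) : (univ.filter fun j : Fin n => (j:ℕ) < k).card = k := by
  rw [← Finset.card_range k]
  apply Finset.card_nbij (i := Fin.val)
  · intro a ha; simp at ha ⊢; omega
  · intro a _ b _ h; exact Fin.val_injective h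
  · intro b hb; simp at hb ⊢; exact ⟨⟨b, by omega⟩, by simpa using hb, rfl⟩

lemma sum_vartheta (n k : ℕ) (hk : k ≤ n) : ∑ j, vartheta n k j = (k : ZMod 2) := by
  unfold vartheta
  rw [Finset.sum_ite, Finset.sum_const, Finset.sum_const_zero, add_zero, card_lt' n k hk]
  simp

lemma wt_add_one {n : ℕ} (v : Fin n → ZMod 2) : wt (v + 1) = n - wt v := by
  unfold wt
  have h2 : ∀ a : ZMod 2, (a + 1 ≠ 0) ↔ ¬ (a ≠ 0) := by decide
  have : (univ.filter fun j => (v + 1) j ≠ 0) = univ.filter fun j => ¬ (v j ≠ 0) := by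
    apply Finset.filter_congr; intro j _; simpa using h2 (v j)
  rw [this, Finset.filter_not, Finset.card_sdiff_of_subset (Finset.filter_subset _ _), Finset.card_univ,
    Fintype.card_fin]

lemma wt_le {n : ℕ} (v : Fin n → ZMod 2) : wt v ≤ n := by
  simpa [wt] using (Finset.card_filter_le univ _).trans (by simp)

lemma add_one_one {n : ℕ} (v : Fin n → ZMod 2) : v + 1 + 1 = v := by
  funext j; show v j + 1 + 1 = v j
  rw [add_assoc]; norm_num
  exact CharTwo.add_self_eq_zero 1

lemma sigmaChar_reflect (n k i : ℕ) (hk : k ≤ n) (hi : i ≤ n) :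
    sigmaChar n (n - i) (vartheta n k) = (-1:ℂ)^k * sigmaChar n i (vartheta n k) := by
  unfold sigmaChar
  rw [Finset.mul_sum]
  apply Finset.sum_nbij' (i := fun v => v + 1) (j := fun v => v + 1)
  · intro v hv; simp only [Finset.mem_filter, Finset.mem_univ, true_and] at hv ⊢
    rw [wt_add_one, hv]; omega
  · intro v hv; simp only [Finset.mem_filter, Finset.mem_univ, true_and] at hv ⊢
    rw [wt_add_one, hv]
  · intro v _; exact add_one_one v
  · intro v _; exact add_one_one v
  · intro v hv
    have : ∀ j, (v + 1) j * vartheta n k j = v j * vartheta n k j + vartheta n k j := by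
      intro j; simp [add_mul]
    rw [Finset.sum_congr rfl fun j _ => this j, Finset.sum_add_distrib, sum_vartheta n k hk,
      neg1_val_add, ZMod.val_natCast,
      show (-1:ℂ)^(k%2) = (-1)^k from (neg_one_pow_eq_pow_mod_two k).symm]
    have h1 : (-1:ℂ)^k * (-1)^k = 1 := by
      rw [← pow_add, show k + k = 2*k by ring, pow_mul]; norm_num
    conv_rhs => rw [mul_comm, mul_assoc, h1, mul_one]

lemma split_sum (f : ℕ → ℂ) (n t : ℕ) (ht : t ≤ n) (hf : ∀ i ≤ n, f (n - i) = f i) :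
    ∑ i ∈ Finset.range (n+1), f i
      = ∑ i ∈ Finset.range (t+1), f i + ∑ i ∈ Finset.range (n - t), f i := by
  rw [Finset.range_eq_Ico, ← Finset.sum_Ico_consecutive f (Nat.zero_le (t+1)) (by omega),
    ← Finset.range_eq_Ico]
  congr 1
  apply Finset.sum_nbij' (i := fun x => n - x) (j := fun x => n - x)
  · intro a ha; simp only [Finset.mem_Ico, Finset.mem_range] at ha ⊢; omega
  · intro a ha; simp only [Finset.mem_Ico, Finset.mem_range] at ha ⊢; omega
  · intro a ha; simp only [Finset.mem_Ico] at ha; omega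
  · intro a ha; simp only [Finset.mem_range] at ha; omega
  · intro a ha; simp only [Finset.mem_Ico] at ha; exact (hf a (by omega)).symm

/-- Let `σ` be an `S_n`-invariant complex representation of `E = (ℤ/2)ⁿ` with
`χ_σ(ϑ_i) = χ_σ(ϑ_{n−i})` for all `0 ≤ i ≤ n`, and write `σ ≅ ⨁_k m_k(σ) σ_k` with
`m_k(σ) = (1/2ⁿ) ∑_{i=0}^n χ_{σ_i}(ϑ_k) χ_σ(ϑ_i)`. Then for `1 ≤ k ≤ n`: `m_k(σ) = 0` if `k`
is odd; `m_k(σ) = (1/2^{n−1}) ∑_{i=0}^{(n−1)/2} χ_{σ_i}(ϑ_k) χ_σ(ϑ_i)` if `k` is even and `n`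
odd; and `m_k(σ) = (1/2^{n−1}) ∑_{i=0}^{(n−2)/2} χ_{σ_i}(ϑ_k) χ_σ(ϑ_i)
+ (1/2ⁿ) χ_{σ_{n/2}}(ϑ_k) χ_σ(ϑ_{n/2})` if `k` and `n` are both even. -/
theorem stmt_8 (n : ℕ) (σ : FDRep ℂ (Multiplicative (Fin n → ZMod 2)))
    (hinv : ∀ (w : Equiv.Perm (Fin n)) (e : Fin n → ZMod 2),
      σ.character (Multiplicative.ofAdd (e ∘ w)) = σ.character (Multiplicative.ofAdd e))
    (hsym : ∀ i ≤ n,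
      σ.character (Multiplicative.ofAdd (vartheta n i)) =
        σ.character (Multiplicative.ofAdd (vartheta n (n - i))))
    (m : ℕ → ℂ)
    (hm : ∀ k, m k = ((2 : ℂ) ^ n)⁻¹ *
      ∑ i ∈ Finset.range (n + 1),
        sigmaChar n i (vartheta n k) * σ.character (Multiplicative.ofAdd (vartheta n i))) :
    ∀ k, 1 ≤ k → k ≤ n →
      (Odd k → m k = 0) ∧
      (Even k → Odd n → m k = ((2 : ℂ) ^ (n - 1))⁻¹ *
        ∑ i ∈ Finset.range ((n - 1) / 2 + 1),
          sigmaChar n i (vartheta n k) * σ.character (Multiplicative.ofAdd (vartheta n i))) ∧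
      (Even k → Even n → m k = ((2 : ℂ) ^ (n - 1))⁻¹ *
        (∑ i ∈ Finset.range ((n - 2) / 2 + 1),
          sigmaChar n i (vartheta n k) * σ.character (Multiplicative.ofAdd (vartheta n i))) +
        ((2 : ℂ) ^ n)⁻¹ *
          (sigmaChar n (n / 2) (vartheta n k) *
            σ.character (Multiplicative.ofAdd (vartheta n (n / 2))))) := by
  intro k hk1 hkn
  set f : ℕ → ℂ := fun i =>
    sigmaChar n i (vartheta n k) * σ.character (Multiplicative.ofAdd (vartheta n i)) with hfdef
  have hf : ∀ i ≤ n, f (n - i) = (-1:ℂ)^k * f i := by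
    intro i hi
    simp only [hfdef]
    rw [sigmaChar_reflect n k i hkn hi, ← hsym i hi]; ring
  have hm' : m k = ((2:ℂ)^n)⁻¹ * ∑ i ∈ Finset.range (n+1), f i := hm k
  have hpow : (2:ℂ)^n = 2^(n-1) * 2 := by rw [← pow_succ]; congr 1; omega
  have hS : ∑ i ∈ Finset.range (n+1), f i = (-1:ℂ)^k * ∑ i ∈ Finset.range (n+1), f i := by
    conv_lhs => rw [← Finset.sum_range_reflect]
    rw [Finset.mul_sum]
    apply Finset.sum_congr rfl
    intro j hj; simp only [Finset.mem_range] at hj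
    rw [show n + 1 - 1 - j = n - j by omega, hf j (by omega)]
  refine ⟨?_, ?_, ?_⟩
  · intro hodd
    rw [hodd.neg_one_pow] at hS
    have h0 : ∑ i ∈ Finset.range (n+1), f i = 0 := by
      have h2 : (2:ℂ) * ∑ i ∈ Finset.range (n+1), f i = 0 := by linear_combination hS
      have := mul_eq_zero.mp h2
      simpa using this
    rw [hm', h0, mul_zero]
  · intro hke hno
    have hf' : ∀ i ≤ n, f (n - i) = f i := fun i hi => by
      rw [hf i hi, hke.neg_one_pow, one_mul]
    obtain ⟨t, hn⟩ := hno
    have hsplit := split_sum f n t (by omega) hf'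
    rw [show n - t = t + 1 by omega] at hsplit
    rw [hm', hsplit, show (n-1)/2 + 1 = t + 1 by omega, hpow, mul_inv]
    field_simp
    ring
  · intro hke hne
    have hf' : ∀ i ≤ n, f (n - i) = f i := fun i hi => by
      rw [hf i hi, hke.neg_one_pow, one_mul]
    obtain ⟨t, hn⟩ := hne
    have ht1 : 1 ≤ t := by omega
    have hsplit := split_sum f n (t-1) (by omega) hf'
    rw [show n - (t-1) = t + 1 by omega, show t - 1 + 1 = t by omega,
      Finset.sum_range_succ f t] at hsplit
    rw [hm', hsplit, show (n-2)/2 + 1 = t by omega, show n/2 = t by omega, hpow, mul_inv]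
    field_simp
    ring
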